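/- arXiv:1207.4013 — 5 statements merged into one kernel-verified Lean document; each statement's English description precedes it below -/
import Mathlib

section
/- Let R be an associative unital ring and let a, b ∈ R satisfy a*b − b*a = b^2. Then for every natural number N one has N! • b^(2N) = Σ_{j=0}^{N} (−1)^j • (N choose j) • (b^j * a^N * b^(N−j)), where N! • x and (N choose j) • x denote natural-number scalar multiples in R. -/
section BrieskornAux

variable {R : Type*} [Ring R]

private def brL (b : R) : AddMonoid.End R := AddMonoidHom.mulLeft b

private def brR (b : R) : AddMonoid.End R := AddMonoidHom.mulRight b

private def brD (b : R) : AddMonoid.End R := brL b - brR b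

private lemma brD_apply (b x : R) : brD b x = b * x - x * b := rfl

private lemma br_end_sum_apply (s : Finset ℕ) (f : ℕ → AddMonoid.End R) (x : R) :
    (∑ i ∈ s, f i) x = ∑ i ∈ s, f i x := by
  induction s using Finset.cons_induction with
  | empty => rfl
  | cons i s hi ih => rw [Finset.sum_cons, Finset.sum_cons, ← ih]; rfl

private lemma br_mulLeft_pow (b : R) (n : ℕ) (x : R) :
    ((brL b) ^ n) x = b ^ n * x := by
  induction n with
  | zero => simp [AddMonoid.End.one_apply]
  | succ n ih =>
      rw [pow_succ']
      show brL b (((brL b) ^ n) x) = _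
      rw [ih]
      show b * (b ^ n * x) = b ^ (n + 1) * x
      rw [pow_succ', mul_assoc]

private lemma br_neg_mulRight_pow (b : R) (n : ℕ) (x : R) :
    ((-(brR b)) ^ n) x = (-1 : ℤ) ^ n • (x * b ^ n) := by
  induction n with
  | zero => simp [AddMonoid.End.one_apply]
  | succ n ih =>
      rw [pow_succ']
      show (-(brR b)) (((-(brR b)) ^ n) x) = _
      rw [ih]
      show -(brR b ((-1 : ℤ) ^ n • (x * b ^ n))) = _
      rw [map_zsmul]
      show -((-1 : ℤ) ^ n • (x * b ^ n * b)) = _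
      rw [← neg_smul, pow_succ b, ← mul_assoc]
      congr 1
      ring

private lemma br_commute (b : R) : Commute (brL b) (-(brR b)) := by
  have h : Commute (brL b) (brR b) := by
    show brL b * brR b = brR b * brL b
    refine AddMonoidHom.ext fun x => ?_
    show b * (x * b) = (b * x) * b
    rw [mul_assoc]
  exact h.neg_right

/-- Binomial expansion of the iterates of `x ↦ b*x - x*b`. -/
private lemma brD_pow_apply (b : R) (n : ℕ) (x : R) :
    ((brD b) ^ n) x =
      ∑ m ∈ Finset.range (n + 1),
        (-1 : ℤ) ^ (n - m) • (Nat.choose n m • (b ^ m * x * b ^ (n - m))) := by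
  have hpow : (brD b) ^ n =
      ∑ m ∈ Finset.range (n + 1),
        (brL b) ^ m * (-(brR b)) ^ (n - m) * (Nat.choose n m : AddMonoid.End R) := by
    rw [brD, sub_eq_add_neg, (br_commute b).add_pow]
  rw [hpow, br_end_sum_apply]
  refine Finset.sum_congr rfl fun m _ => ?_
  show ((brL b) ^ m) (((-(brR b)) ^ (n - m)) ((Nat.choose n m : AddMonoid.End R) x)) = _
  rw [AddMonoid.End.natCast_apply, br_neg_mulRight_pow, map_zsmul, smul_mul_assoc,
    map_nsmul, br_mulLeft_pow]
  congr 2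
  rw [mul_assoc]

end BrieskornAux

section BrieskornMain

variable {R : Type*} [Ring R]

private lemma brD_mul (b x y : R) : brD b (x * y) = brD b x * y + x * brD b y := by
  simp only [brD_apply]
  noncomm_ring

private lemma brD_a (a b : R) (hab : a * b - b * a = b ^ 2) : brD b a = -(b ^ 2) := by
  rw [brD_apply, ← hab]
  abel

private lemma brD_bsq (b z : R) : brD b (b ^ 2 * z) = b ^ 2 * brD b z := by
  simp only [brD_apply]
  rw [pow_two]
  noncomm_ring

/-- Leibniz-type recursion for iterates of `brD b` applied to `a * y`. -/
private lemma br_key (a b : R) (hab : a * b - b * a = b ^ 2) :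
    ∀ (n : ℕ) (y : R),
      ((brD b) ^ (n + 1)) (a * y) =
        a * ((brD b) ^ (n + 1)) y - (n + 1) • (b ^ 2 * ((brD b) ^ n) y) := by
  intro n
  induction n with
  | zero =>
      intro y
      rw [pow_one, pow_zero, AddMonoid.End.one_apply, brD_mul, brD_a a b hab]
      rw [show ((0 : ℕ) + 1) • (b ^ 2 * y) = b ^ 2 * y from one_smul ℕ _]
      rw [neg_mul]
      abel
  | succ n ih =>
      intro y
      have hstep : ∀ z : R, ((brD b) ^ (n + 2)) z = brD b (((brD b) ^ (n + 1)) z) :=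
        fun z => by rw [pow_succ']; rfl
      rw [hstep (a * y), ih y, map_sub, map_nsmul, brD_mul, brD_a a b hab, brD_bsq,
        ← hstep y]
      have hstep' : brD b (((brD b) ^ n) y) = ((brD b) ^ (n + 1)) y := by
        rw [pow_succ']; rfl
      rw [hstep']
      rw [succ_nsmul ((b ^ 2 * ((brD b) ^ (n + 1)) y)) (n + 1)]
      rw [neg_mul]
      abel

/-- Main computation: `D^n (a^n) = ((-1)^n * n!) • b^(2n)` and `D^(n+1)(a^n) = 0`. -/
private lemma br_main (a b : R) (hab : a * b - b * a = b ^ 2) :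
    ∀ n : ℕ,
      ((brD b) ^ n) (a ^ n) = ((-1 : ℤ) ^ n * (Nat.factorial n)) • b ^ (2 * n) ∧
      ((brD b) ^ (n + 1)) (a ^ n) = 0 := by
  intro n
  induction n with
  | zero =>
      constructor
      · simp [AddMonoid.End.one_apply]
      · simp [pow_one, brD_apply]
  | succ n ih =>
      obtain ⟨h1, h2⟩ := ih
      have hpowa : a ^ (n + 1) = a * a ^ n := by rw [pow_succ']
      have hzero2 : ((brD b) ^ (n + 2)) (a ^ n) = 0 := by
        have : ((brD b) ^ (n + 2)) (a ^ n) = brD b (((brD b) ^ (n + 1)) (a ^ n)) := by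
          rw [pow_succ']; rfl
        rw [this, h2, map_zero]
      constructor
      · rw [hpowa, br_key a b hab n (a ^ n), h1, h2, mul_zero, zero_sub]
        rw [mul_smul_comm]
        rw [← natCast_zsmul, smul_smul, ← neg_smul]
        have hb : b ^ 2 * b ^ (2 * n) = b ^ (2 * (n + 1)) := by
          rw [← pow_add]
          ring_nf
        rw [hb]
        congr 1
        push_cast [Nat.factorial_succ]
        ring
      · rw [hpowa, br_key a b hab (n + 1) (a ^ n), hzero2, h2, mul_zero, mul_zero,
          smul_zero, sub_zero]

end BrieskornMain

/-- paper's Lemma "a donne b".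
Let `R` be an associative unital ring and `a b : R` with `a*b - b*a = b^2`.
Then for every `N : ℕ`,
`N! • b^(2N) = ∑_{j=0}^{N} (-1)^j • (N choose j) • (b^j * a^N * b^(N-j))`. -/
theorem brieskorn_factorial_smul_b_pow_two_mul
    {R : Type*} [Ring R] (a b : R) (hab : a * b - b * a = b ^ 2) (N : ℕ) :
    (Nat.factorial N) • b ^ (2 * N) =
      ∑ j ∈ Finset.range (N + 1),
        (-1 : ℤ) ^ j • ((Nat.choose N j) • (b ^ j * a ^ N * b ^ (N - j))) := by
  have hmain := (br_main a b hab N).1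
  have hexp := brD_pow_apply b N (a ^ N)
  have hsc : (-1 : ℤ) ^ N * ((-1 : ℤ) ^ N * (Nat.factorial N)) = (Nat.factorial N : ℤ) := by
    rw [← mul_assoc, ← pow_add, ← two_mul, pow_mul]
    norm_num
  calc (Nat.factorial N) • b ^ (2 * N)
      = (-1 : ℤ) ^ N • (((-1 : ℤ) ^ N * (Nat.factorial N)) • b ^ (2 * N)) := by
        rw [smul_smul, hsc, natCast_zsmul]
    _ = (-1 : ℤ) ^ N • (((brD b) ^ N) (a ^ N)) := by rw [hmain]
    _ = ∑ j ∈ Finset.range (N + 1),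
        (-1 : ℤ) ^ j • ((Nat.choose N j) • (b ^ j * a ^ N * b ^ (N - j))) := by
        rw [hexp, Finset.smul_sum]
        refine Finset.sum_congr rfl fun m hm => ?_
        have hmN : m ≤ N := Nat.lt_succ_iff.mp (Finset.mem_range.mp hm)
        rw [smul_smul]
        congr 1
        rw [← pow_add]
        have h2 : N + (N - m) = 2 * (N - m) + m := by omega
        rw [h2, pow_add, pow_mul]
        norm_num
end

section
/- Let R be an associative unital ℚ-algebra, let a, b ∈ R satisfy a*b − b*a = b^2, and let M be a left R-module. If a^N • m = 0 for every m ∈ M, then b^(2N) • m = 0 for every m ∈ M. -/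
/-- consequence of the paper's Lemma "a donne b".
Let `R` be an associative unital `ℚ`-algebra, `a b : R` with `a*b - b*a = b^2`,
and `M` a left `R`-module.  If `a^N` kills `M` then `b^(2N)` kills `M`. -/
theorem brieskorn_b_pow_two_mul_kills_of_a_pow_kills
    {R : Type*} [Ring R] [Algebra ℚ R]
    {M : Type*} [AddCommGroup M] [Module R M]
    (a b : R) (hab : a * b - b * a = b ^ 2) (N : ℕ)
    (hN : ∀ m : M, a ^ N • m = 0) :
    ∀ m : M, b ^ (2 * N) • m = 0 := by
  intro m
  rcases Nat.eq_zero_or_pos N with h0 | hpos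
  · subst h0
    have h := hN m
    simpa using h
  · set f : R → R := fun y => a * y - y * a with hf
    have hab' : a * b = b * a + b ^ 2 := by rw [← hab]; abel
    -- L1 : commutation with powers of b
    have L1 : ∀ k : ℕ, a * b ^ k = b ^ k * a + k • b ^ (k + 1) := by
      intro k
      induction k with
      | zero => simp
      | succ k ih =>
        have e1 : a * b ^ (k + 1) = (a * b ^ k) * b := by
          rw [pow_succ, ← mul_assoc]
        have e2 : b ^ k * b ^ 2 = b ^ (k + 1 + 1) := by
          rw [show k + 1 + 1 = k + 2 from rfl, ← pow_add]
        rw [e1, ih, add_mul, smul_mul_assoc, mul_assoc, hab', mul_add,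
          ← mul_assoc, ← pow_succ, ← pow_succ, e2, succ_nsmul]
        abel
    -- L2 : iterated commutators of b
    have L2 : ∀ k : ℕ, f^[k] b = (Nat.factorial k) • b ^ (k + 1) := by
      intro k
      induction k with
      | zero => simp [Nat.factorial]
      | succ k ih =>
        rw [Function.iterate_succ_apply', ih]
        simp only [hf]
        simp only [mul_smul_comm, smul_mul_assoc, ← smul_sub]
        have e3 : a * b ^ (k + 1) - b ^ (k + 1) * a = (k + 1) • b ^ (k + 1 + 1) := by
          rw [L1 (k + 1)]; abel
        rw [e3, smul_smul, Nat.factorial_succ, Nat.mul_comm (k + 1) (Nat.factorial k)]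
    -- the annihilation lemma
    have kills : ∀ (i j : ℕ) (x : R) (m : M), N ≤ i ∨ N ≤ j →
        (a ^ i * x * a ^ j) • m = 0 := by
      intro i j x m hij
      rcases hij with hi | hj
      · obtain ⟨d, rfl⟩ := Nat.exists_eq_add_of_le hi
        rw [pow_add]
        simp only [mul_smul, hN, smul_zero]
      · obtain ⟨d, rfl⟩ := Nat.exists_eq_add_of_le hj
        rw [add_comm N d, pow_add]
        simp only [mul_smul, hN, smul_zero]
    -- every n-fold iterate of f kills m if all split terms do
    have K : ∀ (n : ℕ) (x : R),
        (∀ i j : ℕ, i + j = n → ∀ m : M, (a ^ i * x * a ^ j) • m = 0) →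
        ∀ m : M, (f^[n] x) • m = 0 := by
      intro n
      induction n with
      | zero =>
        intro x hx m
        have := hx 0 0 rfl m
        simpa using this
      | succ n ih =>
        intro x hx m
        rw [Function.iterate_succ_apply]
        refine ih (f x) ?_ m
        intro i j hij m'
        have h1 : (a ^ (i + 1) * x * a ^ j) • m' = 0 := hx (i + 1) j (by omega) m'
        have h2 : (a ^ i * x * a ^ (j + 1)) • m' = 0 := hx i (j + 1) (by omega) m'
        have e : a ^ i * f x * a ^ j
            = a ^ (i + 1) * x * a ^ j - a ^ i * x * a ^ (j + 1) := by
          simp only [hf]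
          rw [pow_succ a i, pow_succ' a j]
          noncomm_ring
        rw [e, sub_smul, h1, h2, sub_zero]
    -- put things together with n = 2N - 1
    set n : ℕ := 2 * N - 1 with hn
    have hn1 : n + 1 = 2 * N := by omega
    have h2 : ((Nat.factorial n) • b ^ (2 * N)) • m = 0 := by
      rw [← hn1, ← L2]
      exact K n b (fun i j hij m' => kills i j b m' (by omega)) m
    have h3 : (((Nat.factorial n : R)) * b ^ (2 * N)) • m = 0 := by
      rw [← nsmul_eq_mul]; exact h2
    have hcast : (Nat.factorial n : R) = algebraMap ℚ R (Nat.factorial n : ℚ) := by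
      simp
    have key : algebraMap ℚ R ((Nat.factorial n : ℚ)⁻¹) *
        ((Nat.factorial n : R) * b ^ (2 * N)) = b ^ (2 * N) := by
      rw [← mul_assoc, hcast, ← map_mul,
        inv_mul_cancel₀ (by exact_mod_cast Nat.factorial_ne_zero n), map_one, one_mul]
    calc b ^ (2 * N) • m
        = (algebraMap ℚ R ((Nat.factorial n : ℚ)⁻¹) *
            ((Nat.factorial n : R) * b ^ (2 * N))) • m := by rw [key]
      _ = algebraMap ℚ R ((Nat.factorial n : ℚ)⁻¹) •
            (((Nat.factorial n : R) * b ^ (2 * N)) • m) := mul_smul _ _ _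
      _ = 0 := by rw [h3, smul_zero]
end

section
/- Let R be an associative unital ring and let a, b ∈ R satisfy a*b − b*a = b^2. Then for every integer n ≥ 1 one has a^n * b = b * a^n + n • (b * a^(n−1) * b). -/
private lemma brieskorn_aux {R : Type*} [Ring R] (a b : R)
    (hab : a * b - b * a = b ^ 2) (n : ℕ) :
    a ^ (n + 1) * b = b * a ^ (n + 1) + (n + 1) • (b * a ^ n * b) := by
  have h1 : a * b = b * a + b ^ 2 := sub_eq_iff_eq_add'.mp hab
  induction n with
  | zero => simpa [pow_two] using h1
  | succ n ih =>
    have h2 : b * a ^ (n + 1) * b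
        = b * (b * a ^ (n + 1)) + (n + 1) • (b * (b * a ^ n * b)) := by
      rw [mul_assoc, ih, mul_add, mul_smul_comm]
    have h3 : a ^ (n + 2) * b
        = (a * b) * a ^ (n + 1) + (n + 1) • ((a * b) * a ^ n * b) := by
      rw [pow_succ', mul_assoc, ih, mul_add, mul_smul_comm]
      simp only [← mul_assoc]
    rw [h3, h1,
      show (n + 2) • (b * a ^ (n + 1) * b)
          = (n + 1) • (b * a ^ (n + 1) * b) + b * a ^ (n + 1) * b from
        succ_nsmul _ _]
    simp only [add_mul, smul_add, pow_succ', pow_two, pow_zero, one_mul, mul_assoc] at h2 ⊢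
    rw [h2]
    abel

/-- the relation `T(a)·b = b·T(a) + b·T'(a)·b` for `T(X) = X^n`.
Let `R` be an associative unital ring and `a b : R` with `a*b - b*a = b^2`.
Then for every `n ≥ 1`, `a^n * b = b * a^n + n • (b * a^(n-1) * b)`. -/
theorem brieskorn_pow_mul_b_comm
    {R : Type*} [Ring R] (a b : R) (hab : a * b - b * a = b ^ 2)
    (n : ℕ) (hn : 1 ≤ n) :
    a ^ n * b = b * a ^ n + n • (b * a ^ (n - 1) * b) := by
  obtain ⟨m, rfl⟩ := Nat.exists_eq_add_of_le hn
  simpa [add_comm 1 m] using brieskorn_aux a b hab m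
end

section
/- Let R be an associative unital ℚ-algebra, let a, b ∈ R satisfy a*b − b*a = b^2, let E be a left R-module and let N be a natural number. Let A := {x ∈ E | a^k • x = 0 for some k ∈ ℕ} (the a-torsion of E) and B := {x ∈ E | b^k • x = 0 for some k ∈ ℕ} (the b-torsion of E). Assume: (i) a^N • x = 0 for every x ∈ A; (ii) B ⊆ A; (iii) every x ∈ E such that x ∈ b^m • E for all m ∈ ℕ belongs to A. Then b^(2N) • x = 0 for every x ∈ B, and moreover ⋂_{m ∈ ℕ} b^m • E = {0}. -/
private def rfac : ℕ → ℕ → ℕ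
  | _, 0 => 1
  | j, (M+1) => j * rfac (j+1) M

private lemma rfac_pos : ∀ (M j : ℕ), 1 ≤ j → 0 < rfac j M
  | 0, _, _ => Nat.one_pos
  | (M+1), j, hj => Nat.mul_pos (by omega) (rfac_pos M (j+1) (by omega))

private lemma nat_smul_cancel {R : Type*} [Ring R] [Algebra ℚ R]
    {E : Type*} [AddCommGroup E] [Module R E]
    {n : ℕ} (hn : n ≠ 0) {v : E} (h : n • v = 0) : v = 0 := by
  have h0 : ((n : ℕ) : R) • v = 0 := by rw [Nat.cast_smul_eq_nsmul]; exact h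
  have h1 : (algebraMap ℚ R (n : ℚ)⁻¹) • (((n : ℕ) : R) • v) = 0 := by
    rw [h0, smul_zero]
  rw [smul_smul] at h1
  have h2 : (algebraMap ℚ R (n : ℚ)⁻¹) * ((n : ℕ) : R) = 1 := by
    rw [show ((n : ℕ) : R) = algebraMap ℚ R ((n : ℕ) : ℚ) by simp, ← map_mul,
      inv_mul_cancel₀ (by exact_mod_cast hn), map_one]
  rw [h2, one_smul] at h1
  exact h1

/-- reduction step in the paper's Proposition on `b`-separation.
Let `R` be an associative unital `ℚ`-algebra with `a b : R` satisfying
`a*b - b*a = b^2`, `E` a left `R`-module, `N : ℕ`.  Let `A` be the `a`-torsion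
and `B` the `b`-torsion of `E`.  If (i) `a^N` kills `A`, (ii) `B ⊆ A`, and
(iii) every element of `⋂ₘ b^m • E` lies in `A`, then `b^(2N)` kills `B` and
`⋂ₘ b^m • E = {0}`. -/
theorem brieskorn_b_torsion_killed_and_b_separated
    {R : Type*} [Ring R] [Algebra ℚ R]
    {E : Type*} [AddCommGroup E] [Module R E]
    (a b : R) (hab : a * b - b * a = b ^ 2) (N : ℕ)
    (hi : ∀ x : E, (∃ k : ℕ, a ^ k • x = 0) → a ^ N • x = 0)
    (hii : ∀ x : E, (∃ k : ℕ, b ^ k • x = 0) → ∃ k : ℕ, a ^ k • x = 0)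
    (hiii : ∀ x : E, (∀ m : ℕ, ∃ y : E, b ^ m • y = x) → ∃ k : ℕ, a ^ k • x = 0) :
    (∀ x : E, (∃ k : ℕ, b ^ k • x = 0) → b ^ (2 * N) • x = 0) ∧
      (⋂ m : ℕ, Set.range fun y : E => b ^ m • y) = {0} := by
  have hab1 : a * b = b ^ 2 + b * a := eq_add_of_sub_eq hab
  -- basic commutation identity
  have hab' : ∀ m : ℕ, a * b ^ m = b ^ m * a + (m : R) * b ^ (m + 1) := by
    intro m
    induction m with
    | zero => simp
    | succ m ih =>
      have h1 : a * b ^ (m + 1) = (a * b ^ m) * b := by rw [pow_succ, ← mul_assoc]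
      rw [h1, ih, add_mul, mul_assoc (b ^ m) a b, hab1]
      rw [mul_add]
      have e1 : b ^ m * b ^ 2 = b ^ (m + 2) := by rw [← pow_add]
      have e2 : b ^ m * (b * a) = b ^ (m + 1) * a := by
        rw [← mul_assoc, ← pow_succ]
      have e3 : (m : R) * b ^ (m + 1) * b = (m : R) * b ^ (m + 2) := by
        rw [mul_assoc, ← pow_succ]
      rw [e1, e2, e3]
      push_cast
      rw [add_mul, one_mul]
      abel
  -- module version of commutation
  have hmod : ∀ (m : ℕ) (y : E),
      a • (b ^ m • y) = b ^ m • (a • y) + m • (b ^ (m + 1) • y) := by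
    intro m y
    rw [smul_smul, hab' m, add_smul, mul_smul, mul_smul, Nat.cast_smul_eq_nsmul]
  -- b-torsion is stable under b^j •
  have hBb : ∀ (x : E) (j : ℕ), (∃ k, b ^ k • x = 0) → ∃ k, b ^ k • (b ^ j • x) = 0 := by
    rintro x j ⟨k, hk⟩
    refine ⟨k, ?_⟩
    rw [smul_smul, ← pow_add, show k + j = j + k by omega, pow_add, mul_smul, hk,
      smul_zero]
  -- b-torsion is stable under a •
  have hBa : ∀ (x : E), (∃ k, b ^ k • x = 0) → ∃ k, b ^ k • (a • x) = 0 := by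
    rintro x ⟨k, hk⟩
    have hk1 : b ^ (k + 1) • x = 0 := by rw [pow_succ', mul_smul, hk, smul_zero]
    have hk2 : b ^ (k + 2) • x = 0 := by
      rw [show k + 2 = (k + 1) + 1 from rfl, pow_succ', mul_smul, hk1, smul_zero]
    refine ⟨k + 1, ?_⟩
    have h : b ^ (k + 1) • (a • x) + (k + 1) • (b ^ (k + 2) • x)
        = a • (b ^ (k + 1) • x) := (hmod (k + 1) x).symm
    rw [hk1, hk2, smul_zero, smul_zero, add_zero] at h
    exact h
  -- b-torsion stable under a^d •
  have hBapow : ∀ (d : ℕ) (x : E), (∃ k, b ^ k • x = 0) →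
      ∃ k, b ^ k • (a ^ d • x) = 0 := by
    intro d
    induction d with
    | zero => intro x hx; simpa using hx
    | succ d ihd =>
      intro x hx
      have h1 : a ^ (d + 1) • x = a ^ d • (a • x) := by
        rw [← mul_smul, ← pow_succ]
      rw [h1]
      exact ihd (a • x) (hBa x hx)
  -- a^N kills b-torsion pre-elements
  have hBA : ∀ x : E, (∃ k, b ^ k • x = 0) → a ^ N • x = 0 :=
    fun x h => hi x (hii x h)
  -- key straightening identity
  have key : ∀ (x : E) (d : ℕ),
      (∀ c' e', d < e' → 2 * N ≤ c' + e' → b ^ c' • (a ^ e' • x) = 0) →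
      ∀ M j e, 1 ≤ j → d ≤ e → 2 * N ≤ j + M + e →
        a ^ M • (b ^ j • (a ^ e • x))
          = rfac j M • (b ^ (j + M) • (a ^ e • x)) := by
    intro x d hIH M
    induction M with
    | zero =>
      intro j e _ _ _
      simp [rfac]
    | succ M ihM =>
      intro j e hj hde h2N
      have step1 : a ^ (M + 1) • (b ^ j • (a ^ e • x))
          = a ^ M • (a • (b ^ j • (a ^ e • x))) := by
        rw [pow_succ, mul_smul]
      have expand : a • (b ^ j • (a ^ e • x))
          = b ^ j • (a ^ (e + 1) • x) + j • (b ^ (j + 1) • (a ^ e • x)) := by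
        rw [hmod j (a ^ e • x)]
        congr 2
        rw [← mul_smul, ← pow_succ']
      rw [step1, expand, smul_add]
      have first : a ^ M • (b ^ j • (a ^ (e + 1) • x))
          = rfac j M • (b ^ (j + M) • (a ^ (e + 1) • x)) :=
        ihM j (e + 1) hj (by omega) (by omega)
      have firstz : b ^ (j + M) • (a ^ (e + 1) • x) = 0 :=
        hIH (j + M) (e + 1) (by omega) (by omega)
      rw [first, firstz, smul_zero, zero_add]
      have second : a ^ M • (b ^ (j + 1) • (a ^ e • x))
          = rfac (j + 1) M • (b ^ ((j + 1) + M) • (a ^ e • x)) :=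
        ihM (j + 1) e (by omega) hde (by omega)
      rw [smul_comm (a ^ M) j, second, smul_smul]
      rw [show (j + 1) + M = j + (M + 1) by omega]
      rfl
  -- main vanishing lemma
  have main : ∀ (t : ℕ) (x : E), (∃ k, b ^ k • x = 0) →
      ∀ c d, 2 * N ≤ c + d → N ≤ d + t → b ^ c • (a ^ d • x) = 0 := by
    intro t
    induction t with
    | zero =>
      intro x hx c d _ h2
      have hd : a ^ d • x = a ^ N • (a ^ (d - N) • x) := by
        rw [← mul_smul, ← pow_add, show N + (d - N) = d from by omega]
      rw [hd, hBA _ (hBapow (d - N) x hx), smul_zero]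
    | succ t iht =>
      intro x hx c d h1 h2
      by_cases hN : N ≤ d + t
      · exact iht x hx c d h1 hN
      · have hdN : d < N := by omega
        have hc : N + 1 ≤ c := by omega
        have hj1 : 1 ≤ c - N := by omega
        have hjc : (c - N) + N = c := by omega
        have hIH : ∀ c' e', d < e' → 2 * N ≤ c' + e' →
            b ^ c' • (a ^ e' • x) = 0 := by
          intro c' e' hde h2n
          exact iht x hx c' e' h2n (by omega)
        have hkey := key x d hIH N (c - N) d hj1 le_rfl (by omega)
        have hzero : a ^ N • (b ^ (c - N) • (a ^ d • x)) = 0 := by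
          apply hBA
          exact hBb _ (c - N) (hBapow d x hx)
        rw [hzero] at hkey
        have hv : b ^ ((c - N) + N) • (a ^ d • x) = 0 :=
          nat_smul_cancel (R := R) (rfac_pos N (c - N) hj1).ne' hkey.symm
        rwa [hjc] at hv
  have kill : ∀ x : E, (∃ k, b ^ k • x = 0) → b ^ (2 * N) • x = 0 := by
    intro x hx
    have h := main N x hx (2 * N) 0 (by omega) (by omega)
    simpa using h
  refine ⟨kill, ?_⟩
  apply Set.eq_singleton_iff_unique_mem.mpr
  constructor
  · exact Set.mem_iInter.mpr fun m => ⟨0, smul_zero _⟩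
  · intro x hxmem
    have hcap : ∀ m : ℕ, ∃ y : E, b ^ m • y = x := by
      intro m
      exact Set.mem_range.mp (Set.mem_iInter.mp hxmem m)
    -- the intersection is stable under b •
    have cap_b : ∀ z : E, (∀ m : ℕ, ∃ y : E, b ^ m • y = z) →
        ∀ m : ℕ, ∃ y : E, b ^ m • y = b • z := by
      intro z hz m
      obtain ⟨y, hy⟩ := hz m
      refine ⟨b • y, ?_⟩
      rw [smul_smul, ← pow_succ, pow_succ', mul_smul, hy]
    -- the intersection is stable under a •
    have cap_a : ∀ z : E, (∀ m : ℕ, ∃ y : E, b ^ m • y = z) →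
        ∀ m : ℕ, ∃ y : E, b ^ m • y = a • z := by
      intro z hz m
      obtain ⟨y, hy⟩ := hz m
      refine ⟨a • y + m • (b • y), ?_⟩
      have h2 : b ^ m • (m • (b • y)) = m • (b ^ (m + 1) • y) := by
        rw [smul_comm, smul_smul, ← pow_succ]
      rw [smul_add, h2, ← hmod m y, hy]
    -- torsion elements of the intersection vanish
    have lemC : ∀ z : E, (∃ k, b ^ k • z = 0) →
        (∀ m : ℕ, ∃ y : E, b ^ m • y = z) → z = 0 := by
      intro z hz hzc
      obtain ⟨u, hu⟩ := hzc (2 * N)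
      have h1 : b ^ (2 * N) • z = 0 := kill z hz
      have h2 : b ^ (2 * N) • (b ^ (2 * N) • u) = 0 := by rw [hu]; exact h1
      have h3 : ∃ k, b ^ k • u = 0 := by
        refine ⟨2 * N + 2 * N, ?_⟩
        rw [pow_add, mul_smul]
        exact h2
      have h4 : b ^ (2 * N) • u = 0 := kill u h3
      rw [← hu, h4]
    -- a-torsion elements of the intersection vanish
    have lemD : ∀ (k : ℕ) (z : E), (∀ m : ℕ, ∃ y : E, b ^ m • y = z) →
        a ^ k • z = 0 → z = 0 := by
      intro k
      induction k with
      | zero => intro z _ h; simpa using h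
      | succ k ihk =>
        intro z hzc haz
        have haz1 : a • z = 0 := by
          apply ihk (a • z) (cap_a z hzc)
          rw [smul_smul, ← pow_succ]
          exact haz
        have C2 : ∀ (q m : ℕ), a ^ q • (b ^ m • z) = rfac m q • (b ^ (m + q) • z) := by
          intro q
          induction q with
          | zero => intro m; simp [rfac]
          | succ q ihq =>
            intro m
            have e1 : a ^ (q + 1) • (b ^ m • z) = a ^ q • (a • (b ^ m • z)) := by
              rw [pow_succ, mul_smul]
            have e2 : a • (b ^ m • z) = m • (b ^ (m + 1) • z) := by
              rw [hmod m z, haz1, smul_zero, zero_add]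
            rw [e1, e2, smul_comm, ihq (m + 1), smul_smul]
            rw [show (m + 1) + q = m + (q + 1) by omega]
            rfl
        obtain ⟨k', hk'⟩ := hiii (b • z) (cap_b z hzc)
        have hN : a ^ N • (b • z) = 0 := hi _ ⟨k', hk'⟩
        have hC := C2 N 1
        rw [pow_one] at hC
        rw [hN] at hC
        have hbz : b ^ (1 + N) • z = 0 :=
          nat_smul_cancel (R := R) (rfac_pos N 1 le_rfl).ne' hC.symm
        exact lemC z ⟨1 + N, hbz⟩ hzc
    obtain ⟨k, hk⟩ := hiii x hcap
    exact lemD k x hcap hk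
end

section
/- Let R be a commutative ring, M an R-module and a an R-linear endomorphism of M. Define α : (ℕ → M) → (ℕ → M) by (α ω)_0 := a(ω_0) and (α ω)_j := a(ω_j) + (j−1) • ω_{j−1} for j ≥ 1 (integer scalar multiplication). Then there exists a family of polynomials T^N_{j,h} ∈ ℤ[X], indexed by natural numbers N, j, h and independent of M, a and ω, such that: (1) the degree of T^N_{j,h} is at most N; (2) X^(N−h) divides T^N_{j,h} whenever h ≤ N; (3) for every ω : ℕ → M, every N and every j, (α^N ω)_j = Σ_{h=0}^{j} (T^N_{j,h} evaluated at the endomorphism a, applied to ω_{j−h}). -/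
universe u v

/-- The action `α` of the element `a` of the algebra `𝒜` on formal series
`Σ_j b^j ω_j`:  `(α ω)_0 = a(ω_0)` and `(α ω)_j = a(ω_j) + (j-1) • ω_{j-1}`
for `j ≥ 1` (integer scalar multiplication), where multiplication by `f` is
abstracted to an `R`-linear endomorphism `a` of `M`. -/
def brieskornAlpha {R M : Type*} [CommRing R] [AddCommGroup M] [Module R M]
    (a : M →ₗ[R] M) (ω : ℕ → M) : ℕ → M
  | 0 => a (ω 0)
  | (k + 1) => a (ω (k + 1)) + (k : ℤ) • ω k

open Polynomial in
noncomputable def brieskornT : ℕ → ℕ → ℕ → Polynomial ℤ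
  | 0, _, 0 => 1
  | 0, _, _+1 => 0
  | N+1, j+1, h+1 => X * brieskornT N (j+1) (h+1) + C (j : ℤ) * brieskornT N j h
  | N+1, j, 0 => X * brieskornT N j 0
  | N+1, 0, h+1 => X * brieskornT N 0 (h+1)

open Polynomial

lemma brieskornT_succ_zero (N j : ℕ) : brieskornT (N+1) j 0 = X * brieskornT N j 0 := by
  cases j <;> rfl

lemma brieskornT_succ_succ (N j h : ℕ) :
    brieskornT (N+1) (j+1) (h+1) = X * brieskornT N (j+1) (h+1) + C (j:ℤ) * brieskornT N j h :=
  rfl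

lemma brieskornT_succ_zero_succ (N h : ℕ) :
    brieskornT (N+1) 0 (h+1) = X * brieskornT N 0 (h+1) := rfl

lemma brieskornT_degree : ∀ N j h : ℕ, (brieskornT N j h).degree ≤ (N : ℕ) := by
  intro N
  induction N with
  | zero =>
    intro j h
    cases h <;> simp [brieskornT]
  | succ N ih =>
    have hX : ∀ j h : ℕ, (X * brieskornT N j h).degree ≤ ((N + 1 : ℕ) : WithBot ℕ) := by
      intro j h
      calc (X * brieskornT N j h).degree ≤ X.degree + (brieskornT N j h).degree :=
            degree_mul_le _ _
        _ ≤ 1 + (N : ℕ) := add_le_add degree_X_le (ih j h)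
        _ = ((N + 1 : ℕ) : WithBot ℕ) := by push_cast; ring
    intro j h
    match j, h with
    | j+1, h+1 =>
      rw [brieskornT_succ_succ]
      refine (degree_add_le _ _).trans (max_le (hX _ _) ?_)
      calc (C (j:ℤ) * brieskornT N j h).degree ≤ (C (j:ℤ)).degree + (brieskornT N j h).degree :=
            degree_mul_le _ _
        _ ≤ 0 + (N : ℕ) := add_le_add degree_C_le (ih j h)
        _ ≤ ((N + 1 : ℕ) : WithBot ℕ) := by
            rw [zero_add]; exact_mod_cast Nat.cast_le.2 (Nat.le_succ N)
      
    | j, 0 => rw [brieskornT_succ_zero]; exact hX j 0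
    | 0, h+1 => rw [brieskornT_succ_zero_succ]; exact hX 0 (h+1)

lemma brieskornT_dvd : ∀ N j h : ℕ, h ≤ N → X ^ (N - h) ∣ brieskornT N j h := by
  intro N
  induction N with
  | zero =>
    intro j h hh
    interval_cases h
    simp [brieskornT]
  | succ N ih =>
    intro j h hh
    have hXmul : ∀ j' h' : ℕ, h' ≤ N + 1 → X ^ (N + 1 - h') ∣ X * brieskornT N j' h' := by
      intro j' h' hh'
      rcases Nat.lt_or_ge h' (N + 1) with hlt | hge
      · have h'le : h' ≤ N := Nat.lt_succ_iff.mp hlt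
        have : (X : Polynomial ℤ) ^ (N + 1 - h') = X * X ^ (N - h') := by
          rw [← pow_succ']
          congr 1
          omega
        rw [this]
        exact mul_dvd_mul_left X (ih j' h' h'le)
      · have : N + 1 - h' = 0 := by omega
        rw [this, pow_zero]
        exact one_dvd _
    match j, h with
    | j+1, h+1 =>
      rw [brieskornT_succ_succ]
      have h1 : X ^ (N + 1 - (h+1)) ∣ X * brieskornT N (j+1) (h+1) := by
        rcases Nat.lt_or_ge (h+1) (N+1) with hlt | hge
        · have : N + 1 - (h + 1) = N - (h+1) + 1 := by omega
          rw [this, pow_succ']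
          exact mul_dvd_mul_left X (ih (j+1) (h+1) (by omega))
        · have : N + 1 - (h + 1) = 0 := by omega
          rw [this, pow_zero]
          exact one_dvd _
      have h2 : X ^ (N + 1 - (h+1)) ∣ C (j:ℤ) * brieskornT N j h := by
        have : N + 1 - (h + 1) = N - h := by omega
        rw [this]
        exact Dvd.dvd.mul_left (ih j h (by omega)) _
      exact dvd_add h1 h2
    | j, 0 => rw [brieskornT_succ_zero]; exact hXmul j 0 (by omega)
    | 0, h+1 => rw [brieskornT_succ_zero_succ]; exact hXmul 0 (h+1) hh

/-- paper's Lemma "action a".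
There is a family of integer polynomials `T^N_{j,h}`, independent of `M`, `a`
and `ω`, with `deg T^N_{j,h} ≤ N`, `X^(N-h) ∣ T^N_{j,h}` for `h ≤ N`, and
`(α^N ω)_j = ∑_{h=0}^{j} T^N_{j,h}(a) (ω_{j-h})`. -/
theorem brieskorn_alpha_pow_formula :
    ∃ T : ℕ → ℕ → ℕ → Polynomial ℤ,
      (∀ N j h : ℕ, (T N j h).degree ≤ (N : ℕ)) ∧
      (∀ N j h : ℕ, h ≤ N → Polynomial.X ^ (N - h) ∣ T N j h) ∧
      (∀ (R : Type u) (M : Type v) [CommRing R] [AddCommGroup M] [Module R M]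
        (a : M →ₗ[R] M) (ω : ℕ → M) (N j : ℕ),
        (brieskornAlpha a)^[N] ω j =
          ∑ h ∈ Finset.range (j + 1),
            (Polynomial.aeval (a : Module.End R M) (T N j h)) (ω (j - h))) := by
  refine ⟨brieskornT, brieskornT_degree, brieskornT_dvd, ?_⟩
  intro R M _ _ _ a ω N j
  induction N generalizing j with
  | zero =>
    rw [Function.iterate_zero_apply]
    rw [Finset.sum_eq_single 0]
    · simp [brieskornT]
    · intro h hmem hne
      obtain ⟨h', rfl⟩ := Nat.exists_eq_succ_of_ne_zero hne
      simp [brieskornT]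
    · simp
  | succ N ih =>
    rw [Function.iterate_succ_apply']
    have hXapp : ∀ (p : Polynomial ℤ) (m : M),
        (aeval (a : Module.End R M) (X * p)) m = a ((aeval (a : Module.End R M) p) m) := by
      intro p m
      rw [map_mul, aeval_X, Module.End.mul_apply]
    have hCapp : ∀ (k : ℤ) (p : Polynomial ℤ) (m : M),
        (aeval (a : Module.End R M) (C k * p)) m = k • ((aeval (a : Module.End R M) p) m) := by
      intro k p m
      rw [map_mul, aeval_C, Module.End.mul_apply, Algebra.algebraMap_eq_smul_one,
        LinearMap.smul_apply, Module.End.one_apply]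
    cases j with
    | zero =>
      show a ((brieskornAlpha a)^[N] ω 0) = _
      rw [ih 0]
      rw [Finset.sum_range_one, Finset.sum_range_one]
      show a ((aeval (a : Module.End R M) (brieskornT N 0 0)) (ω 0)) =
        (aeval (a : Module.End R M) (brieskornT (N+1) 0 0)) (ω 0)
      rw [brieskornT_succ_zero, hXapp]
    | succ k =>
      show a ((brieskornAlpha a)^[N] ω (k+1)) + (k : ℤ) • (brieskornAlpha a)^[N] ω k = _
      rw [ih (k+1), ih k, map_sum, Finset.smul_sum]
      have hsplit : ∀ h ∈ Finset.range (k + 2),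
          (aeval (a : Module.End R M) (brieskornT (N+1) (k+1) h)) (ω (k+1-h)) =
          a ((aeval (a : Module.End R M) (brieskornT N (k+1) h)) (ω (k+1-h))) +
          (if hh : h = 0 then 0 else
            (k : ℤ) • ((aeval (a : Module.End R M) (brieskornT N k (h-1))) (ω (k+1-h)))) := by
        intro h _
        cases h with
        | zero =>
          rw [dif_pos rfl, add_zero, brieskornT_succ_zero, hXapp]
        | succ h' =>
          rw [dif_neg (Nat.succ_ne_zero h'), Nat.add_sub_cancel, brieskornT_succ_succ,
            map_add, LinearMap.add_apply, hXapp, hCapp]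
      rw [Finset.sum_congr rfl hsplit, Finset.sum_add_distrib]
      congr 1
      conv_rhs => rw [Finset.sum_range_succ']
      rw [dif_pos rfl, add_zero]
      apply Finset.sum_congr rfl
      intro i _
      rw [dif_neg (Nat.succ_ne_zero i), Nat.add_sub_cancel]
      have h1 : k + 1 - (i + 1) = k - i := by omega
      rw [h1]
end
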